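/- arXiv:1709.04597 — 3 statements merged into one kernel-verified Lean document; each statement's English description precedes it below -/
import Mathlib

section
/- Let A be a C*-algebra and let a, b be positive elements of A. Then a is Cuntz subequivalent to b if and only if for every ε > 0 there exist δ > 0 and x ∈ A such that (a − ε)₊ = x* (b − δ)₊ x. -/
open Filter Topology
open scoped ENNReal NNReal

variable {A : Type*}

/-- Cuntz subequivalence: `a ≾ b` iff `vₙ * b * vₙ* → a` for some sequence `vₙ`. -/
def CuntzSub [NonUnitalRing A] [StarRing A] [TopologicalSpace A] (a b : A) : Prop :=
  ∃ v : ℕ → A, Tendsto (fun n => v n * b * star (v n)) atTop (nhds a)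

/-- Cuntz equivalence. -/
def CuntzEquiv [NonUnitalRing A] [StarRing A] [TopologicalSpace A] (a b : A) : Prop :=
  CuntzSub a b ∧ CuntzSub b a

/-- `(a - ε)₊`, the positive part of `a - ε`, via continuous functional calculus. -/
noncomputable def cutoff [CStarAlgebra A] (ε : ℝ) (a : A) : A :=
  cfc (fun t : ℝ => max (t - ε) 0) a

/-
Backward direction: `(b - δ)₊ = g(b) b g(b)` for a continuous `g ≥ 0`, so every `(a - ε)₊` has the
form `v b v*`, and `(a - ε)₊ → a` as `ε → 0`.

Forward direction (Kirchberg–Rørdam): choose `w, δ` with `‖a - w (b - δ)₊ w*‖ < ε`, and put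
`y = w (b - δ)₊^{1/2}`, `ε' = ‖a - y y*‖ < ε`. Then `(a - ε)₊ = g(a) (a - ε') g(a) ≤ z z*` with
`z = g(a) y`. Rørdam's lemma writes `(a - ε)₊^{1/2} = u F^{1/4}` for `F = z z*`, and
`d = lim z* (F + 1/n)^{-1/4}` satisfies `d* d = F^{1/2}`; hence `W = d u*` has
`W* W = (a - ε)₊` and lies in the closed right ideal generated by `(b - δ)₊^{1/2}`. On that ideal
`(b - δ/2)₊^{1/2} σ(b)` acts as the identity, where `σ(t) = (t - δ/2)^{-1/2}` for `t ≥ δ`, and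
so `(a - ε)₊ = (σ(b) W)* (b - δ/2)₊ (σ(b) W)`.
-/

open Set

lemma sq_sub_le_abs_sq_sub_sq {p q : ℝ} (hp : 0 ≤ p) (hq : 0 ≤ q) :
    (p - q) ^ 2 ≤ |p ^ 2 - q ^ 2| :=
  calc (p - q) ^ 2 = |p - q| * |p - q| := by rw [← sq, sq_abs]
    _ ≤ |p - q| * (p + q) :=
        mul_le_mul_of_nonneg_left (abs_sub_le_iff.2 ⟨by linarith, by linarith⟩) (abs_nonneg _)
    _ = |p ^ 2 - q ^ 2| := by
        rw [show p ^ 2 - q ^ 2 = (p - q) * (p + q) by ring, abs_mul,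
          abs_of_nonneg (add_nonneg hp hq)]

lemma abs_div_sqrt_add_sub_sqrt_le {t η : ℝ} (ht : 0 ≤ t) (hη : 0 < η) :
    |t / √(t + η) - √t| ≤ √η := by
  have hr : 0 < √(t + η) := Real.sqrt_pos.2 (by linarith)
  have hsr : √t ≤ √(t + η) := Real.sqrt_le_sqrt (by linarith)
  have hre : √(t + η) ≤ √t + √η := by
    rw [Real.sqrt_le_left (by positivity)]
    nlinarith [Real.sq_sqrt ht, Real.sq_sqrt hη.le, Real.sqrt_nonneg t, Real.sqrt_nonneg η]
  have key : t / √(t + η) - √t = -(√t * (√(t + η) - √t) / √(t + η)) := by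
    field_simp
    linear_combination -Real.mul_self_sqrt ht
  rw [key, abs_neg, abs_of_nonneg (by have := Real.sqrt_nonneg t; positivity)]
  calc √t * (√(t + η) - √t) / √(t + η) ≤ √(t + η) - √t := by
        rw [div_le_iff₀ hr]; nlinarith [Real.sqrt_nonneg t]
    _ ≤ √η := by linarith

noncomputable def invQuarterRoot (η t : ℝ) : ℝ := (√√(t + η))⁻¹

lemma continuousOn_invQuarterRoot {η : ℝ} (hη : 0 < η) : ContinuousOn (invQuarterRoot η) (Ici 0) :=
  ContinuousOn.inv₀ (by fun_prop) fun t ht => by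
    have : (0:ℝ) ≤ t := ht
    positivity

lemma invQuarterRoot_nonneg (η t : ℝ) : 0 ≤ invQuarterRoot η t := by
  unfold invQuarterRoot; positivity

lemma abs_invQuarterRoot_sq_mul_sub_sqrt_le {η t : ℝ} (ht : 0 ≤ t) (hη : 0 < η) :
    |invQuarterRoot η t ^ 2 * t - √t| ≤ √η := by
  rw [invQuarterRoot, inv_pow, Real.sq_sqrt (Real.sqrt_nonneg _), inv_mul_eq_div]
  exact abs_div_sqrt_add_sub_sqrt_le ht hη

lemma sq_invQuarterRoot_sub_mul_le {η₁ η₂ t : ℝ} (ht : 0 ≤ t) (h₁ : 0 < η₁) (h₂ : 0 < η₂) :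
    (invQuarterRoot η₁ t - invQuarterRoot η₂ t) ^ 2 * t ≤ √η₁ + √η₂ :=
  calc (invQuarterRoot η₁ t - invQuarterRoot η₂ t) ^ 2 * t
      ≤ |invQuarterRoot η₁ t ^ 2 - invQuarterRoot η₂ t ^ 2| * t :=
        mul_le_mul_of_nonneg_right
          (sq_sub_le_abs_sq_sub_sq (invQuarterRoot_nonneg _ _) (invQuarterRoot_nonneg _ _)) ht
    _ = |(invQuarterRoot η₁ t ^ 2 * t - √t) - (invQuarterRoot η₂ t ^ 2 * t - √t)| := by
        rw [← abs_of_nonneg ht, ← abs_mul, abs_of_nonneg ht]; ring_nf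
    _ ≤ √η₁ + √η₂ := (abs_sub _ _).trans (add_le_add
        (abs_invQuarterRoot_sq_mul_sub_sqrt_le ht h₁) (abs_invQuarterRoot_sq_mul_sub_sqrt_le ht h₂))

lemma sq_one_sub_invQuarterRoot_mul_le {η t : ℝ} (ht : 0 ≤ t) (hη : 0 < η) :
    (1 - invQuarterRoot η t * √√t) ^ 2 * t ≤ η := by
  set P := √√t
  set Q := √√(t + η)
  have hP : 0 ≤ P := Real.sqrt_nonneg _
  have hQ : 0 < Q := by positivity
  have hPQ : P ≤ Q := Real.sqrt_le_sqrt (Real.sqrt_le_sqrt (by linarith))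
  have hP4 : P ^ 4 = t := by
    rw [show P ^ 4 = (P ^ 2) ^ 2 by ring, Real.sq_sqrt (Real.sqrt_nonneg _), Real.sq_sqrt ht]
  have hQ4 : Q ^ 4 = t + η := by
    rw [show Q ^ 4 = (Q ^ 2) ^ 2 by ring, Real.sq_sqrt (Real.sqrt_nonneg _),
      Real.sq_sqrt (by linarith)]
  rw [invQuarterRoot, ← div_eq_inv_mul, one_sub_div hQ.ne', div_pow, div_mul_eq_mul_div,
    div_le_iff₀ (by positivity), ← hP4]
  have h : (Q - P) * P ^ 4 ≤ (Q + P) * ((Q ^ 2 + P ^ 2) * Q ^ 2) :=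
    mul_le_mul (by linarith) (by nlinarith [pow_le_pow_left₀ hP hPQ 4]) (by positivity)
      (by positivity)
  calc (Q - P) ^ 2 * P ^ 4 = (Q - P) * ((Q - P) * P ^ 4) := by ring
    _ ≤ (Q - P) * ((Q + P) * ((Q ^ 2 + P ^ 2) * Q ^ 2)) :=
        mul_le_mul_of_nonneg_left h (sub_nonneg.2 hPQ)
    _ = η * Q ^ 2 := by rw [show η = Q ^ 4 - P ^ 4 by linarith]; ring

section Closure

variable {M : Type*} [Semigroup M] [TopologicalSpace M]

lemma closure_range_mul_mul_subset (y c : M) :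
    closure (range ((y * c) * ·)) ⊆ closure (range (y * ·)) :=
  closure_mono <| by rintro _ ⟨z, rfl⟩; exact ⟨c * z, (mul_assoc _ _ _).symm⟩

lemma mul_mem_closure_range_mul [ContinuousMul M] {y w : M}
    (hw : w ∈ closure (range (y * ·))) (c : M) : w * c ∈ closure (range (y * ·)) :=
  map_mem_closure (f := (· * c)) (continuous_mul_const c) hw <| by
    rintro _ ⟨z, rfl⟩; exact ⟨z * c, (mul_assoc _ _ _).symm⟩

lemma mul_eq_self_of_mem_closure_range_mul [ContinuousMul M] [T2Space M] {e y w : M}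
    (hey : e * y = y) (hw : w ∈ closure (range (y * ·))) : e * w = w :=
  closure_minimal (t := {w | e * w = w}) (by rintro _ ⟨z, rfl⟩; simp [← mul_assoc, hey])
    (isClosed_eq (continuous_const_mul e) continuous_id) hw

end Closure

lemma cuntzSub_iff_mem_closure [NonUnitalRing A] [StarRing A] [TopologicalSpace A]
    [FrechetUrysohnSpace A] {a b : A} :
    CuntzSub a b ↔ a ∈ closure (range fun v => v * b * star v) := by
  rw [mem_closure_iff_seq_limit]
  constructor
  · rintro ⟨v, hv⟩
    exact ⟨_, fun n => ⟨v n, rfl⟩, hv⟩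
  · rintro ⟨c, hc, hlim⟩
    choose v hv using hc
    exact ⟨v, by simpa only [hv] using hlim⟩

section CStarAlgebra

variable [CStarAlgebra A]

lemma cfc_mul_mul (f g h : ℝ → ℝ) (a : A)
    (hf : ContinuousOn f (spectrum ℝ a) := by cfc_cont_tac)
    (hg : ContinuousOn g (spectrum ℝ a) := by cfc_cont_tac)
    (hh : ContinuousOn h (spectrum ℝ a) := by cfc_cont_tac) :
    cfc f a * cfc g a * cfc h a = cfc (fun t => f t * g t * h t) a := by
  rw [cfc_mul (fun t => f t * g t) h a (hf.mul hg), cfc_mul f g a]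

lemma cfc_mul_self_mul_cfc (f : ℝ → ℝ) {a : A} (ha : IsSelfAdjoint a)
    (hf : ContinuousOn f (spectrum ℝ a) := by cfc_cont_tac) :
    cfc f a * a * cfc f a = cfc (fun t => f t ^ 2 * t) a := by
  rw [show (fun t => f t ^ 2 * t) = fun t => f t * t * f t by ext; ring,
    ← cfc_mul_mul f (fun t => t) f a hf (by fun_prop) hf, cfc_id' ℝ a ha]

lemma exists_cutoff_eq_conj_sub {a : A} (ha : IsSelfAdjoint a) {ε' ε : ℝ} (h : ε' < ε) :
    ∃ g : A, IsSelfAdjoint g ∧ cutoff ε a = g * (a - algebraMap ℝ A ε') * g := by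
  have hden : ∀ t, 0 < max (t - ε') (ε - ε') := fun t => (sub_pos.2 h).trans_le (le_max_right _ _)
  set g : ℝ → ℝ := fun t => √(max (t - ε) 0 / max (t - ε') (ε - ε'))
  have hg : Continuous g :=
    Real.continuous_sqrt.comp (Continuous.div (by fun_prop) (by fun_prop) fun t => (hden t).ne')
  refine ⟨cfc g a, cfc_predicate g a, ?_⟩
  have hsub : a - algebraMap ℝ A ε' = cfc (fun t => t - ε') a := by
    rw [cfc_sub (fun t => t) _ a, cfc_id' ℝ a, cfc_const ε' a]
  rw [hsub, cfc_mul_mul g _ g a hg.continuousOn (by fun_prop) hg.continuousOn, cutoff]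
  refine cfc_congr fun t _ => ?_
  rw [mul_right_comm, Real.mul_self_sqrt (div_nonneg (le_max_right _ _) (hden t).le)]
  rcases le_or_gt ε t with hεt | htε
  · rw [max_eq_left (by linarith : 0 ≤ t - ε), max_eq_left (by linarith : ε - ε' ≤ t - ε'),
      div_mul_cancel₀ _ (by linarith)]
  · rw [max_eq_right (by linarith : t - ε ≤ 0), zero_div, zero_mul]

noncomputable def sqrtCutoff (δ : ℝ) (b : A) : A :=
  cfc (fun t : ℝ => √(max (t - δ) 0)) b

lemma isSelfAdjoint_sqrtCutoff (δ : ℝ) (b : A) : IsSelfAdjoint (sqrtCutoff δ b) :=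
  cfc_predicate _ b

lemma sqrtCutoff_mul_self (δ : ℝ) (b : A) : sqrtCutoff δ b * sqrtCutoff δ b = cutoff δ b := by
  rw [sqrtCutoff, ← cfc_mul _ _ b, cutoff]
  exact cfc_congr fun t _ => Real.mul_self_sqrt (le_max_right _ _)

lemma exists_star_mul_self_eq_conj_cutoff {b w : A} {c δ : ℝ} (hcδ : c < δ)
    (hw : w ∈ closure (range (sqrtCutoff δ b * ·))) :
    ∃ x : A, star w * w = star x * cutoff c b * x := by
  have hden : ∀ t, 0 < max (t - c) (δ - c) := fun t => (sub_pos.2 hcδ).trans_le (le_max_right _ _)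
  set σ : ℝ → ℝ := fun t => (√(max (t - c) (δ - c)))⁻¹
  have hσ : Continuous σ := (by fun_prop : Continuous fun t => √(max (t - c) (δ - c))).inv₀
    fun t => (Real.sqrt_pos.2 (hden t)).ne'
  have hs : IsSelfAdjoint (cfc σ b) := cfc_predicate σ b
  -- `(b - c)₊^{1/2} σ(b)` is a left unit of `(b - δ)₊^{1/2}`: `σ(t) = (t - c)^{-1/2}` for `t ≥ δ`
  have he : sqrtCutoff c b * cfc σ b * sqrtCutoff δ b = sqrtCutoff δ b := by
    simp only [sqrtCutoff]
    rw [cfc_mul_mul _ σ _ b (by fun_prop) hσ.continuousOn (by fun_prop)]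
    refine cfc_congr fun t _ => ?_
    rcases le_or_gt δ t with hδt | htδ
    · simp only [σ]
      rw [max_eq_left (by linarith : 0 ≤ t - c), max_eq_left (by linarith : δ - c ≤ t - c),
        mul_inv_cancel₀ (Real.sqrt_pos.2 (by linarith)).ne', one_mul]
    · rw [max_eq_right (by linarith : t - δ ≤ 0), Real.sqrt_zero, mul_zero]
  refine ⟨cfc σ b * w, ?_⟩
  calc star w * w = star (sqrtCutoff c b * cfc σ b * w) * (sqrtCutoff c b * cfc σ b * w) := by
        rw [mul_eq_self_of_mem_closure_range_mul he hw]
    _ = star w * (cfc σ b * (sqrtCutoff c b * sqrtCutoff c b) * cfc σ b) * w := by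
        simp only [star_mul, hs.star_eq, (isSelfAdjoint_sqrtCutoff c b).star_eq, mul_assoc]
    _ = star (cfc σ b * w) * cutoff c b * (cfc σ b * w) := by
        rw [sqrtCutoff_mul_self]; simp only [star_mul, hs.star_eq, mul_assoc]

variable [PartialOrder A] [StarOrderedRing A]

lemma cutoff_nonneg (ε : ℝ) (c : A) : 0 ≤ cutoff ε c :=
  cfc_nonneg fun _ _ => le_max_right _ _

lemma norm_sub_cutoff_le {c : A} (hc : 0 ≤ c) {ε : ℝ} (hε : 0 ≤ ε) : ‖c - cutoff ε c‖ ≤ ε := by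
  have hsub : c - cutoff ε c = cfc (fun t => t - max (t - ε) 0) c := by
    rw [cfc_sub (fun t => t) _ c, cfc_id' ℝ c, cutoff]
  rw [hsub]
  refine norm_cfc_le hε fun t ht => ?_
  have ht0 : 0 ≤ t := spectrum_nonneg_of_nonneg hc ht
  rw [Real.norm_eq_abs, abs_le]
  constructor <;> cases max_cases (t - ε) 0 <;> linarith

lemma norm_mul_cfc_le_sqrt {x F : A} {f : ℝ → ℝ} {c : ℝ} (hx : star x * x ≤ F) (hc : 0 ≤ c)
    (h : ∀ t ∈ spectrum ℝ F, f t ^ 2 * t ≤ c)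
    (hf : ContinuousOn f (spectrum ℝ F) := by cfc_cont_tac) :
    ‖x * cfc f F‖ ≤ √c := by
  have hF : 0 ≤ F := (star_mul_self_nonneg x).trans hx
  have hg : IsSelfAdjoint (cfc f F) := cfc_predicate f F
  have hsq : ‖x * cfc f F‖ ^ 2 ≤ c := by
    rw [sq, ← CStarRing.norm_star_mul_self]
    calc ‖star (x * cfc f F) * (x * cfc f F)‖ = ‖cfc f F * (star x * x) * cfc f F‖ := by
          simp only [star_mul, hg.star_eq, mul_assoc]
      _ ≤ ‖cfc f F * F * cfc f F‖ := by
          refine CStarAlgebra.norm_le_norm_of_nonneg_of_le ?_ ?_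
          · exact hg.conjugate_nonneg (star_mul_self_nonneg x)
          · exact hg.conjugate_le_conjugate hx
      _ ≤ c := by
          rw [cfc_mul_self_mul_cfc f hF.isSelfAdjoint hf]
          refine norm_cfc_le hc fun t ht => ?_
          have ht0 := spectrum_nonneg_of_nonneg hF ht
          rw [Real.norm_eq_abs, abs_of_nonneg (by positivity)]
          exact h t ht
  exact Real.le_sqrt_of_sq_le hsq

lemma continuousOn_invQuarterRoot_spectrum {F : A} (hF : 0 ≤ F) (n : ℕ) :
    ContinuousOn (invQuarterRoot (1 / (n + 1))) (spectrum ℝ F) :=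
  (continuousOn_invQuarterRoot (by positivity)).mono fun _ ht => spectrum_nonneg_of_nonneg hF ht

lemma cauchySeq_mul_cfc_invQuarterRoot {x F : A} (hx : star x * x ≤ F) :
    CauchySeq fun n : ℕ => x * cfc (invQuarterRoot (1 / (n + 1))) F := by
  have hF : 0 ≤ F := (star_mul_self_nonneg x).trans hx
  have hcont := continuousOn_invQuarterRoot_spectrum hF
  refine cauchySeq_of_le_tendsto_0 (fun N : ℕ => √(2 * √(1 / (N + 1)))) (fun n m N hn hm => ?_) ?_
  · rw [dist_eq_norm, ← mul_sub, ← cfc_sub _ _ F (hcont n) (hcont m)]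
    refine norm_mul_cfc_le_sqrt hx (by positivity) (fun t ht => ?_) ((hcont n).sub (hcont m))
    have hmono : ∀ k : ℕ, N ≤ k → √(1 / (k + 1 : ℝ)) ≤ √(1 / (N + 1)) := fun k hk =>
      Real.sqrt_le_sqrt (one_div_le_one_div_of_le (by positivity) (by gcongr))
    calc _ ≤ √(1 / (n + 1 : ℝ)) + √(1 / (m + 1 : ℝ)) :=
          sq_invQuarterRoot_sub_mul_le (spectrum_nonneg_of_nonneg hF ht) (by positivity)
            (by positivity)
      _ ≤ 2 * √(1 / (N + 1)) := by linarith [hmono n hn, hmono m hm]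
  · simpa only [Function.comp_def, Real.sqrt_zero, mul_zero] using
      ((by fun_prop : Continuous fun η : ℝ => √(2 * √η)).tendsto 0).comp
      tendsto_one_div_add_atTop_nhds_zero_nat

lemma tendsto_mul_cfc_invQuarterRoot_mul {x F : A} (hx : star x * x ≤ F) :
    Tendsto (fun n : ℕ => x * cfc (invQuarterRoot (1 / (n + 1))) F * cfc (fun t => √√t) F)
      atTop (𝓝 x) := by
  have hF : 0 ≤ F := (star_mul_self_nonneg x).trans hx
  have hcont := continuousOn_invQuarterRoot_spectrum hF
  rw [tendsto_iff_norm_sub_tendsto_zero]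
  refine squeeze_zero (fun _ => norm_nonneg _) (fun n => ?_) (g := fun n : ℕ => √(1 / (n + 1)))
    (by simpa only [Function.comp_def, Real.sqrt_zero] using
      (Real.continuous_sqrt.tendsto 0).comp tendsto_one_div_add_atTop_nhds_zero_nat)
  have hsub : x - x * cfc (invQuarterRoot (1 / (n + 1))) F * cfc (fun t => √√t) F =
      x * cfc (fun t => 1 - invQuarterRoot (1 / (n + 1)) t * √√t) F := by
    rw [cfc_sub (fun _ => (1 : ℝ)) (fun t => invQuarterRoot (1 / (n + 1)) t * √√t) F
      continuousOn_const ((hcont n).mul (by fun_prop)), cfc_const_one ℝ F,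
      cfc_mul (invQuarterRoot (1 / (n + 1))) (fun t => √√t) F (hcont n), mul_sub, mul_one,
      mul_assoc]
  rw [norm_sub_rev, hsub]
  exact norm_mul_cfc_le_sqrt hx (by positivity)
    (fun t ht => sq_one_sub_invQuarterRoot_mul_le (spectrum_nonneg_of_nonneg hF ht) (by positivity))
    (continuousOn_const.sub ((hcont n).mul (by fun_prop)))

lemma tendsto_star_mul_self_mul_cfc_invQuarterRoot {x F : A} (hx : star x * x = F) :
    Tendsto (fun n : ℕ => star (x * cfc (invQuarterRoot (1 / (n + 1))) F) *
      (x * cfc (invQuarterRoot (1 / (n + 1))) F)) atTop (𝓝 (cfc (fun t => √t) F)) := by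
  have hF : 0 ≤ F := hx ▸ star_mul_self_nonneg x
  have hcont := continuousOn_invQuarterRoot_spectrum hF
  have hsq : ∀ n : ℕ, star (x * cfc (invQuarterRoot (1 / (n + 1))) F) *
      (x * cfc (invQuarterRoot (1 / (n + 1))) F) =
      cfc (fun t => invQuarterRoot (1 / (n + 1)) t ^ 2 * t) F := fun n => by
    rw [← cfc_mul_self_mul_cfc _ hF.isSelfAdjoint (hcont n)]
    simp only [star_mul, (cfc_predicate (invQuarterRoot (1 / (n + 1))) F).star_eq, mul_assoc]
    rw [← mul_assoc (star x) x, hx]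
  simp only [hsq]
  rw [tendsto_iff_norm_sub_tendsto_zero]
  refine squeeze_zero (fun _ => norm_nonneg _) (fun n => ?_) (g := fun n : ℕ => √(1 / (n + 1)))
    (by simpa only [Function.comp_def, Real.sqrt_zero] using
      (Real.continuous_sqrt.tendsto 0).comp tendsto_one_div_add_atTop_nhds_zero_nat)
  rw [← cfc_sub (fun t => invQuarterRoot (1 / (n + 1)) t ^ 2 * t) (fun t => √t) F
    (((hcont n).pow 2).mul (by fun_prop))]
  refine norm_cfc_le (by positivity) fun t ht => ?_
  exact abs_invQuarterRoot_sq_mul_sub_sqrt_le (spectrum_nonneg_of_nonneg hF ht) (by positivity)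

lemma exists_mem_closure_range_star_mul_self_eq {x z : A} (h : star x * x ≤ z * star z) :
    ∃ w ∈ closure (range (star z * ·)), star w * w = x * star x := by
  obtain ⟨u, hu⟩ := cauchySeq_tendsto_of_complete (cauchySeq_mul_cfc_invQuarterRoot h)
  have hxu : x = u * cfc (fun t => √√t) (z * star z) :=
    tendsto_nhds_unique (tendsto_mul_cfc_invQuarterRoot_mul h) (hu.mul_const _)
  have hz : star (star z) * star z = z * star z := by rw [star_star]
  obtain ⟨d, hd⟩ := cauchySeq_tendsto_of_complete (cauchySeq_mul_cfc_invQuarterRoot hz.le)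
  have hdd : star d * d = cfc (fun t => √t) (z * star z) :=
    tendsto_nhds_unique (hd.star.mul hd) (tendsto_star_mul_self_mul_cfc_invQuarterRoot hz)
  have hmem : d ∈ closure (range (star z * ·)) :=
    mem_closure_of_tendsto hd (Eventually.of_forall fun _ => ⟨_, rfl⟩)
  refine ⟨d * star u, mul_mem_closure_range_mul hmem _, ?_⟩
  have hq : IsSelfAdjoint (cfc (fun t => √√t) (z * star z)) := cfc_predicate _ _
  calc star (d * star u) * (d * star u) = u * (star d * d) * star u := by
        simp only [star_mul, star_star, mul_assoc]
    _ = u * (cfc (fun t => √√t) (z * star z) * cfc (fun t => √√t) (z * star z)) * star u := by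
        rw [hdd, ← cfc_mul (fun t => √√t) (fun t => √√t) (z * star z)]
        congr 2
        exact cfc_congr fun t _ => (Real.mul_self_sqrt (Real.sqrt_nonneg t)).symm
    _ = x * star x := by
        rw [hxu, star_mul, hq.star_eq]
        simp only [mul_assoc]

lemma exists_mem_closure_range_star_mul_self_eq_cutoff {a y : A} (ha : IsSelfAdjoint a) {ε : ℝ}
    (h : ‖a - y * star y‖ < ε) :
    ∃ w ∈ closure (range (star y * ·)), star w * w = cutoff ε a := by
  obtain ⟨g, hg, hcut⟩ := exists_cutoff_eq_conj_sub ha h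
  have hle : a - algebraMap ℝ A ‖a - y * star y‖ ≤ y * star y :=
    sub_le_comm.mp (ha.sub (IsSelfAdjoint.mul_star_self y)).le_algebraMap_norm_self
  have hx : IsSelfAdjoint (CFC.sqrt (cutoff ε a)) := (CFC.sqrt_nonneg _).isSelfAdjoint
  have hsq := CFC.sqrt_mul_sqrt_self (cutoff ε a) (cutoff_nonneg ε a)
  obtain ⟨w, hw, hww⟩ := exists_mem_closure_range_star_mul_self_eq (x := CFC.sqrt (cutoff ε a))
    (z := g * y) <| by
      rw [hx.star_eq, hsq, hcut, star_mul, hg.star_eq, ← mul_assoc, mul_assoc g y]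
      exact hg.conjugate_le_conjugate hle
  rw [star_mul, hg.star_eq] at hw
  exact ⟨w, closure_range_mul_mul_subset _ _ hw, by rw [hww, hx.star_eq, hsq]⟩

lemma exists_norm_sub_conj_cutoff_lt {a b : A} (hb : 0 ≤ b)
    (h : a ∈ closure (range fun v => v * b * star v)) {ε : ℝ} (hε : 0 < ε) :
    ∃ w : A, ∃ δ > 0, ‖a - w * cutoff δ b * star w‖ < ε := by
  obtain ⟨_, ⟨w, rfl⟩, hw⟩ := Metric.mem_closure_iff.1 h (ε / 2) (half_pos hε)
  set δ := ε / 2 / (‖w‖ ^ 2 + 1)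
  have hδ : 0 < δ := div_pos (half_pos hε) (by positivity)
  refine ⟨w, δ, hδ, ?_⟩
  have hconj : ‖w * (b - cutoff δ b) * star w‖ ≤ ‖w‖ ^ 2 * δ :=
    calc ‖w * (b - cutoff δ b) * star w‖ ≤ ‖w‖ * ‖b - cutoff δ b‖ * ‖star w‖ :=
          (norm_mul_le _ _).trans (mul_le_mul_of_nonneg_right (norm_mul_le _ _) (norm_nonneg _))
      _ ≤ ‖w‖ ^ 2 * δ := by
          rw [norm_star, mul_right_comm, ← sq]
          gcongr
          exact norm_sub_cutoff_le hb hδ.le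
  have hδε : ‖w‖ ^ 2 * δ < ε / 2 :=
    (mul_lt_mul_of_pos_right (lt_add_one _) hδ).trans_eq (mul_div_cancel₀ _ (by positivity))
  calc ‖a - w * cutoff δ b * star w‖ = ‖(a - w * b * star w) + w * (b - cutoff δ b) * star w‖ := by
        congr 1; noncomm_ring
    _ ≤ ‖a - w * b * star w‖ + ‖w * (b - cutoff δ b) * star w‖ := norm_add_le _ _
    _ < ε := by rw [← dist_eq_norm]; linarith

end CStarAlgebra

/-- Rørdam's characterization: `a ≾ b` iff for every `ε > 0` there are `δ > 0` and
`x ∈ A` with `(a - ε)₊ = x* (b - δ)₊ x`. -/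
theorem cuntzSub_iff_cutoff_conjugate [CStarAlgebra A] [PartialOrder A] [StarOrderedRing A]
    (a b : A) (ha : 0 ≤ a) (hb : 0 ≤ b) :
    CuntzSub a b ↔
      ∀ ε : ℝ, 0 < ε → ∃ δ : ℝ, 0 < δ ∧ ∃ x : A, cutoff ε a = star x * cutoff δ b * x := by
  rw [cuntzSub_iff_mem_closure]
  constructor
  · intro h ε hε
    obtain ⟨w, δ, hδ, hlt⟩ := exists_norm_sub_conj_cutoff_lt hb h hε
    have hB := (isSelfAdjoint_sqrtCutoff δ b).star_eq
    have hy : w * sqrtCutoff δ b * star (w * sqrtCutoff δ b) = w * cutoff δ b * star w := by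
      rw [star_mul, hB, ← sqrtCutoff_mul_self]; simp only [mul_assoc]
    obtain ⟨W, hW, hWW⟩ :=
      exists_mem_closure_range_star_mul_self_eq_cutoff ha.isSelfAdjoint (hy ▸ hlt)
    rw [star_mul, hB] at hW
    obtain ⟨x, hx⟩ :=
      exists_star_mul_self_eq_conj_cutoff (half_lt_self hδ) (closure_range_mul_mul_subset _ _ hW)
    exact ⟨δ / 2, half_pos hδ, x, hWW ▸ hx⟩
  · intro h
    refine Metric.mem_closure_iff.2 fun r hr => ?_
    obtain ⟨δ, hδ, x, hx⟩ := h (r / 2) (half_pos hr)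
    obtain ⟨g, hg, hcut⟩ := exists_cutoff_eq_conj_sub hb.isSelfAdjoint hδ
    refine ⟨_, ⟨star x * g, rfl⟩, ?_⟩
    have hconj : star x * g * b * star (star x * g) = cutoff (r / 2) a := by
      rw [hx, hcut, map_zero, sub_zero, star_mul, star_star, hg.star_eq]; simp only [mul_assoc]
    rw [show (fun v => v * b * star v) (star x * g) = cutoff (r / 2) a from hconj, dist_eq_norm]
    exact (norm_sub_cutoff_le ha (half_pos hr).le).trans_lt (half_lt_self hr)
end

section
/- Let 0 → I → A →^π A/I → 0 be a short exact sequence of C*-algebras, and suppose I has a quasi-central approximate unit (p_n) consisting of projections. Let a, b be positive elements of A. If for every ε > 0 there exists N such that ((1−p_n) a (1−p_n) − ε)₊ ≾ (1−p_n) b (1−p_n) in A for all n ≥ N, then π(a) ≾ π(b) in A/I. -/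
open Filter Topology
open scoped ENNReal NNReal

variable {A : Type*}

/-!
Since `π` kills every `pₙ`, it maps the corner `(1 - pₙ) x (1 - pₙ)` to `π x`; being a continuous
star homomorphism it commutes with the functional calculus and preserves Cuntz subequivalence.
Applying `π` to the hypothesis therefore gives `(π a - ε)₊ ≾ π b` for every `ε > 0`. As
`‖(π a - ε)₊ - π a‖ ≤ ε` and the set of elements Cuntz below `π b` is closed, `π a ≾ π b`.
-/

namespace CuntzSub

variable [NonUnitalRing A] [StarRing A] [TopologicalSpace A]

theorem iff_mem_closure [FrechetUrysohnSpace A] {a b : A} :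
    CuntzSub a b ↔ a ∈ closure (Set.range fun v : A => v * b * star v) := by
  rw [mem_closure_iff_seq_limit]
  constructor
  · rintro ⟨v, hv⟩
    exact ⟨_, fun n => ⟨v n, rfl⟩, hv⟩
  · rintro ⟨x, hx, hlim⟩
    choose v hv using hx
    exact ⟨v, by simpa only [hv] using hlim⟩

theorem of_tendsto [FrechetUrysohnSpace A] {ι : Type*} {l : Filter ι} [l.NeBot]
    {u : ι → A} {a b : A} (hu : ∀ᶠ i in l, CuntzSub (u i) b) (hlim : Tendsto u l (𝓝 a)) :
    CuntzSub a b :=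
  iff_mem_closure.2 <| isClosed_closure.mem_of_tendsto hlim <|
    hu.mono fun _ hi => iff_mem_closure.1 hi

theorem map {B F : Type*} [NonUnitalRing B] [StarRing B] [TopologicalSpace B]
    [FunLike F A B] [NonUnitalRingHomClass F A B] [StarHomClass F A B]
    (φ : F) (hφ : Continuous φ) {a b : A} (hab : CuntzSub a b) : CuntzSub (φ a) (φ b) := by
  obtain ⟨v, hv⟩ := hab
  refine ⟨fun n => φ (v n), ?_⟩
  simpa only [Function.comp_def, map_mul, map_star] using (hφ.tendsto a).comp hv

end CuntzSub

section Cutoff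

variable [CStarAlgebra A]

theorem continuous_cutoff_fun (ε : ℝ) : Continuous fun t : ℝ => max (t - ε) 0 := by
  fun_prop

theorem map_cutoff {B F : Type*} [CStarAlgebra B] [FunLike F A B] [AlgHomClass F ℂ A B]
    [StarHomClass F A B] (φ : F) (hφ : Continuous φ) (ε : ℝ) {c : A} (hc : IsSelfAdjoint c) :
    φ (cutoff ε c) = cutoff ε (φ c) :=
  StarAlgHomClass.map_cfc (S := ℂ) φ _ c (continuous_cutoff_fun ε).continuousOn hφ hc
    (hc.map φ)

theorem norm_cutoff_sub_le {c : A} (hc : IsSelfAdjoint c) (hspec : ∀ t ∈ spectrum ℝ c, 0 ≤ t)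
    {ε : ℝ} (hε : 0 ≤ ε) : ‖cutoff ε c - c‖ ≤ ε := by
  have hsub : cutoff ε c - c = cfc (fun t : ℝ => max (t - ε) 0 - t) c := by
    rw [cutoff, cfc_sub (fun t : ℝ => max (t - ε) 0) (fun t : ℝ => t) c
      (continuous_cutoff_fun ε).continuousOn continuous_id.continuousOn, cfc_id' ℝ c]
  rw [hsub]
  refine norm_cfc_le hε fun t ht => ?_
  have ht0 := hspec t ht
  rw [Real.norm_eq_abs, abs_le]
  constructor <;> cases max_cases (t - ε) 0 <;> linarith

theorem tendsto_cutoff_nhdsGT_zero {c : A} (hc : IsSelfAdjoint c)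
    (hspec : ∀ t ∈ spectrum ℝ c, 0 ≤ t) :
    Tendsto (fun ε => cutoff ε c) (𝓝[>] 0) (𝓝 c) := by
  rw [tendsto_iff_norm_sub_tendsto_zero]
  exact squeeze_zero' (.of_forall fun _ => norm_nonneg _)
    (eventually_nhdsWithin_of_forall fun _ hε => norm_cutoff_sub_le hc hspec hε.le)
    (tendsto_nhdsWithin_of_tendsto_nhds tendsto_id)

end Cutoff

-- for the automatic continuity of `π`
open scoped CStarAlgebra

theorem quotient_cuntzSub_of_corner_general {B : Type*} [CStarAlgebra A] [CStarAlgebra B]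
    [PartialOrder A] [StarOrderedRing A]
    (π : A →⋆ₐ[ℂ] B)
    (I : TwoSidedIdeal A) (hker : ∀ x : A, π x = 0 ↔ x ∈ I)
    (p : ℕ → A) (hproj : ∀ n, IsSelfAdjoint (p n) ∧ IsIdempotentElem (p n) ∧ p n ∈ I)
    (a b : A) (ha : 0 ≤ a)
    (h : ∀ ε : ℝ, 0 < ε → ∃ N : ℕ, ∀ n ≥ N,
      CuntzSub (cutoff ε ((1 - p n) * a * (1 - p n))) ((1 - p n) * b * (1 - p n))) :
    CuntzSub (π a) (π b) := by
  have hπ : Continuous π := map_continuous π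
  have hcorner (n : ℕ) (x : A) : π ((1 - p n) * x * (1 - p n)) = π x := by
    simp [(hker (p n)).2 (hproj n).2.2]
  have hπa : IsSelfAdjoint (π a) := ha.isSelfAdjoint.map π
  have hspec : ∀ t ∈ spectrum ℝ (π a), 0 ≤ t := fun t ht =>
    spectrum_nonneg_of_nonneg ha (AlgHom.spectrum_apply_subset (π.restrictScalars ℝ) a ht)
  have hcut (ε : ℝ) (hε : 0 < ε) : CuntzSub (cutoff ε (π a)) (π b) := by
    obtain ⟨N, hN⟩ := h ε hε
    have hsa : IsSelfAdjoint ((1 - p N) * a * (1 - p N)) := by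
      simpa only [((IsSelfAdjoint.one A).sub (hproj N).1).star_eq] using
        ha.isSelfAdjoint.conjugate (1 - p N)
    simpa only [map_cutoff π hπ ε hsa, hcorner] using (hN N le_rfl).map π hπ
  exact CuntzSub.of_tendsto (l := 𝓝[>] 0) (eventually_nhdsWithin_of_forall hcut)
    (tendsto_cutoff_nhdsGT_zero hπa hspec)

/-- If `(1-pₙ) a (1-pₙ)` is eventually `ε`-Cuntz-below `(1-pₙ) b (1-pₙ)` for all `ε`,
where `(pₙ)` is a quasi-central approximate unit of projections for `I = ker π`, then
`π(a) ≾ π(b)` in `A/I`. -/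
theorem quotient_cuntzSub_of_corner {B : Type*} [CStarAlgebra A] [CStarAlgebra B]
    [PartialOrder A] [StarOrderedRing A]
    (π : A →⋆ₐ[ℂ] B) (hsurj : Function.Surjective π)
    (I : TwoSidedIdeal A) (hIc : IsClosed (I : Set A)) (hker : ∀ x : A, π x = 0 ↔ x ∈ I)
    (p : ℕ → A) (hproj : ∀ n, IsSelfAdjoint (p n) ∧ IsIdempotentElem (p n) ∧ p n ∈ I)
    (happrox : ∀ x ∈ I, Tendsto (fun n => p n * x) atTop (nhds x) ∧
      Tendsto (fun n => x * p n) atTop (nhds x))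
    (hqc : ∀ x : A, Tendsto (fun n => ‖p n * x - x * p n‖) atTop (nhds 0))
    (a b : A) (ha : 0 ≤ a) (hb : 0 ≤ b)
    (h : ∀ ε : ℝ, 0 < ε → ∃ N : ℕ, ∀ n ≥ N,
      CuntzSub (cutoff ε ((1 - p n) * a * (1 - p n))) ((1 - p n) * b * (1 - p n))) :
    CuntzSub (π a) (π b) :=
  quotient_cuntzSub_of_corner_general π I hker p hproj a b ha h
end

section
/- Let A be a C*-algebra, I a simple closed two-sided ideal of A, and τ a lower semicontinuous densely defined trace on I. Then τ extends to a lower semicontinuous trace on A, and consequently for positive a, b ∈ I: if d_σ(a) ≤ d_σ(b) for every lower semicontinuous trace σ on A, then d_τ(a) ≤ d_τ(b) for every lower semicontinuous densely defined trace τ on I. -/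
open Filter Topology
open scoped ENNReal NNReal

variable {A : Type*}

/-- A lower semicontinuous `[0,∞]`-valued trace on a C*-algebra. -/
structure LSCTrace (A : Type*) [CStarAlgebra A] [PartialOrder A] [StarOrderedRing A] where
  toFun : A → ℝ≥0∞
  map_zero' : toFun 0 = 0
  add' : ∀ a b : A, 0 ≤ a → 0 ≤ b → toFun (a + b) = toFun a + toFun b
  smul' : ∀ (r : ℝ≥0) (a : A), 0 ≤ a → toFun (r • a) = r * toFun a
  trace' : ∀ a : A, toFun (star a * a) = toFun (a * star a)
  lsc : LowerSemicontinuous toFun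

/-- The dimension function `d_τ(a) = lim_n τ(a^{1/n}) = sup_{ε>0} τ((a-ε)₊)`
associated to a lower semicontinuous trace `τ`. -/
noncomputable def dFun [CStarAlgebra A] [PartialOrder A] [StarOrderedRing A]
    (τ : LSCTrace A) (a : A) : ℝ≥0∞ :=
  ⨆ ε : {ε : ℝ // 0 < ε}, τ.toFun (cutoff ε.1 a)

/-- A lower semicontinuous, densely defined `[0,∞]`-valued trace on a closed two-sided
ideal `I` of `A` (recorded as a function on `A` constrained on `I`). -/
structure LSCTraceOn (A : Type*) [CStarAlgebra A] [PartialOrder A] [StarOrderedRing A]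
    (I : TwoSidedIdeal A) where
  toFun : A → ℝ≥0∞
  map_zero' : toFun 0 = 0
  add' : ∀ a b : A, a ∈ I → b ∈ I → 0 ≤ a → 0 ≤ b → toFun (a + b) = toFun a + toFun b
  smul' : ∀ (r : ℝ≥0) (a : A), a ∈ I → 0 ≤ a → toFun (r • a) = r * toFun a
  trace' : ∀ x : A, star x * x ∈ I → x * star x ∈ I → toFun (star x * x) = toFun (x * star x)
  lsc : LowerSemicontinuousOn toFun (I : Set A)
  dense' : {x : A | x ∈ I ∧ 0 ≤ x} ⊆ closure {x : A | x ∈ I ∧ 0 ≤ x ∧ toFun x ≠ ∞}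

/-- The dimension function of a trace on an ideal. -/
noncomputable def dFunOn [CStarAlgebra A] [PartialOrder A] [StarOrderedRing A]
    {I : TwoSidedIdeal A} (τ : LSCTraceOn A I) (a : A) : ℝ≥0∞ :=
  ⨆ ε : {ε : ℝ // 0 < ε}, τ.toFun (cutoff ε.1 a)

/-! The extension is `τ̃ a = ⨆ e, τ (e^{1/2} a e^{1/2})`, with `e` running over the positive open
unit ball of `I`, which is upward directed and so serves as an approximate unit. The trace
property of `τ` rewrites each term as `τ (a^{1/2} e a^{1/2})`, which is monotone in `e`; by
directedness the supremum is then additive. Lower semicontinuity of `τ` along an approximate unit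
of `C*(x)` gives `τ̃ = τ` on `I₊`, and the trace property of `τ̃` follows from
`τ̃ (a a*) = ⨆ e, τ (a* e a) = ⨆ e, τ̃ (a* e a) ≤ τ̃ (a* a)`. Finally `(a - ε)₊ ∈ I` for `a ∈ I₊`,
so `d_τ` and `d_τ̃` agree on `I₊`. -/

open CFC

lemma TwoSidedIdeal.mul_mul_mem {R : Type*} [NonUnitalNonAssocRing R] {J : TwoSidedIdeal R}
    (c : R) {x : R} (hx : x ∈ J) (d : R) : c * x * d ∈ J :=
  J.mul_mem_right _ _ (J.mul_mem_left _ _ hx)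

namespace TwoSidedIdeal

section FunctionalCalculus

variable [CStarAlgebra A] {I : TwoSidedIdeal A}

lemma cfcₙ_mem (hI : IsClosed (I : Set A)) (f : ℝ → ℝ) {a : A} (ha : a ∈ I)
    (ha' : IsSelfAdjoint a) : cfcₙ f a ∈ I := by
  -- `I` is not known to be closed under `star`, so the induction carries `star x ∈ I` along.
  have hadjoin : ∀ x ∈ NonUnitalStarAlgebra.adjoin ℝ {a}, x ∈ I ∧ star x ∈ I := by
    intro x hx
    induction hx using NonUnitalStarAlgebra.adjoin_induction with
    | mem x hx => rw [Set.mem_singleton_iff.mp hx, ha'.star_eq]; exact ⟨ha, ha⟩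
    | add x y _ _ hx hy => exact ⟨I.add_mem hx.1 hy.1, star_add x y ▸ I.add_mem hx.2 hy.2⟩
    | zero => simp only [star_zero, and_self]; exact I.zero_mem
    | mul x y _ _ _ hy => exact ⟨I.mul_mem_left _ _ hy.1, star_mul x y ▸ I.mul_mem_right _ _ hy.2⟩
    | smul r x _ hx =>
      rw [star_smul, Algebra.smul_def, Algebra.smul_def]
      exact ⟨I.mul_mem_left _ _ hx.1, I.mul_mem_left _ _ hx.2⟩
    | star x _ hx => exact ⟨hx.2, (star_star x).symm ▸ hx.1⟩
  have helemental : (NonUnitalStarAlgebra.elemental ℝ a : Set A) ⊆ I :=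
    closure_minimal (fun x hx => (hadjoin x hx).1) hI
  exact helemental (cfcₙ_mem_elemental f a)

lemma cutoff_mem (hI : IsClosed (I : Set A)) {ε : ℝ} (hε : 0 ≤ ε) {a : A} (ha : a ∈ I)
    (ha' : IsSelfAdjoint a) : cutoff ε a ∈ I := by
  rw [cutoff, ← cfcₙ_eq_cfc (hf0 := by simpa using hε)]
  exact I.cfcₙ_mem hI _ ha ha'

end FunctionalCalculus

variable [CStarAlgebra A] [PartialOrder A] [StarOrderedRing A] {I : TwoSidedIdeal A}

lemma cfcₙ_nnreal_mem (hI : IsClosed (I : Set A)) (f : ℝ≥0 → ℝ≥0) {a : A} (ha : a ∈ I)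
    (ha0 : 0 ≤ a) : cfcₙ f a ∈ I := by
  rw [cfcₙ_nnreal_eq_real f a ha0]
  exact I.cfcₙ_mem hI _ ha ha0.isSelfAdjoint

lemma sqrt_mem (hI : IsClosed (I : Set A)) {a : A} (ha : a ∈ I) (ha0 : 0 ≤ a) :
    sqrt a ∈ I :=
  I.cfcₙ_nnreal_mem hI _ ha ha0

variable (I) in
def nonnegBall : Set A := {e | e ∈ I ∧ 0 ≤ e ∧ ‖e‖ < 1}

lemma le_one_of_mem_nonnegBall {e : A} (he : e ∈ I.nonnegBall) : e ≤ 1 :=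
  (CStarAlgebra.norm_le_one_iff_of_nonneg e he.2.1).mp he.2.2.le

lemma sqrt_mul_mul_sqrt_mem (hI : IsClosed (I : Set A)) {e : A} (he : e ∈ I.nonnegBall)
    (a : A) : sqrt e * a * sqrt e ∈ I :=
  I.mul_mem_right _ _ (I.mul_mem_right _ _ (I.sqrt_mem hI he.1 he.2.1))

lemma directedOn_nonnegBall (hI : IsClosed (I : Set A)) : DirectedOn (· ≤ ·) I.nonnegBall := by
  -- `f` is operator monotone and inverts `g` on `[0, 1)`, so `f (g a + g b)` dominates `a`, `b`.
  let f : ℝ≥0 → ℝ≥0 := fun x => 1 - (1 + x)⁻¹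
  let g : ℝ≥0 → ℝ≥0 := fun x => x * (1 - x)⁻¹
  have hfg : ∀ a ∈ I.nonnegBall, a = cfcₙ f (cfcₙ g a) := by
    rintro a ⟨-, ha0, ha1⟩
    have hlt : ∀ x ∈ quasispectrum ℝ≥0 a, x < 1 := fun x hx =>
      (CStarAlgebra.le_nnnorm_of_mem_quasispectrum hx).trans_lt ha1
    rw [← cfcₙ_comp f g a ?_ (by simp [f]) ?_ (by simp [g]) ha0]
    · conv_lhs => rw [← cfcₙ_id ℝ≥0 a]
      exact cfcₙ_congr fun x hx => (Set.InvOn.one_sub_one_add_inv.1 (hlt x hx)).symm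
    · fun_prop (disch := intro _ _; positivity)
    · have (x) (hx : x ∈ quasispectrum ℝ≥0 a) : 1 - x ≠ 0 := (tsub_pos_of_lt (hlt x hx)).ne'
      fun_prop
  have hg : ∀ a ∈ I.nonnegBall, cfcₙ g a ∈ I ∧ 0 ≤ cfcₙ g a := fun a ha =>
    ⟨cfcₙ_nnreal_mem hI g ha.1 ha.2.1, cfcₙ_nonneg_of_predicate⟩
  rintro a ha b hb
  obtain ⟨hgaI, hga0⟩ := hg a ha
  obtain ⟨hgbI, hgb0⟩ := hg b hb
  have hsum0 : 0 ≤ cfcₙ g a + cfcₙ g b := add_nonneg hga0 hgb0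
  refine ⟨cfcₙ f (cfcₙ g a + cfcₙ g b),
    ⟨cfcₙ_nnreal_mem hI f (I.add_mem hgaI hgbI) hsum0, cfcₙ_nonneg_of_predicate,
      norm_cfcₙ_one_sub_one_add_inv_lt_one _⟩, ?_, ?_⟩
  · exact (hfg a ha).trans_le
      (CFC.monotoneOn_one_sub_one_add_inv hga0 hsum0 (le_add_of_nonneg_right hgb0))
  · exact (hfg b hb).trans_le
      (CFC.monotoneOn_one_sub_one_add_inv hgb0 hsum0 (le_add_of_nonneg_left hga0))

lemma exists_tendsto_sqrt_mul_mul_sqrt (hI : IsClosed (I : Set A)) {x : A} (hx : x ∈ I)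
    (hx0 : 0 ≤ x) :
    ∃ e : ℕ → A, (∀ n, e n ∈ I.nonnegBall) ∧
      Tendsto (fun n => sqrt x * e n * sqrt x) atTop (𝓝 x) := by
  let φ (n : ℕ) (t : ℝ) : ℝ := (n + 1) * t / (1 + (n + 1) * t)
  have hspec : ∀ t ∈ quasispectrum ℝ x, 0 ≤ t := quasispectrum_nonneg_of_nonneg x hx0
  have hden : ∀ n : ℕ, ∀ t ∈ quasispectrum ℝ x, 0 < 1 + (n + 1) * t := fun n t ht => by
    have := hspec t ht; positivity
  have hφ : ∀ n, ∀ t ∈ quasispectrum ℝ x, 0 ≤ φ n t ∧ φ n t < 1 := fun n t ht => by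
    have := hspec t ht
    refine ⟨by positivity, (div_lt_one (hden n t ht)).mpr (by linarith)⟩
  have hcont : ∀ n, ContinuousOn (φ n) (quasispectrum ℝ x) := fun n =>
    ContinuousOn.div (by fun_prop) (by fun_prop) fun t ht => (hden n t ht).ne'
  refine ⟨fun n => cfcₙ (φ n) x, fun n => ⟨I.cfcₙ_mem hI _ hx hx0.isSelfAdjoint,
    cfcₙ_nonneg fun t ht => (hφ n t ht).1, norm_cfcₙ_lt fun t ht => ?_⟩, ?_⟩
  · rw [Real.norm_of_nonneg (hφ n t ht).1]
    exact (hφ n t ht).2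
  have hdist : ∀ n : ℕ, ‖sqrt x * cfcₙ (φ n) x * sqrt x - x‖ ≤ 1 / (n + 1) := fun n => by
    have hsqrt : sqrt x * cfcₙ (φ n) x * sqrt x - x = cfcₙ (fun t => √t * φ n t * √t - t) x := by
      rw [sqrt_eq_real_sqrt x hx0, ← cfcₙ_mul .., ← cfcₙ_mul .., cfcₙ_sub .., cfcₙ_id' ℝ x]
    rw [hsqrt]
    refine norm_cfcₙ_le fun t ht => ?_
    have ht0 := hspec t ht
    have hd := hden n t ht
    have : √t * φ n t * √t - t = -(t / (1 + (n + 1) * t)) := by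
      rw [mul_right_comm, Real.mul_self_sqrt ht0]
      simp only [φ]
      field_simp
      ring
    rw [this, norm_neg, Real.norm_of_nonneg (by positivity), div_le_div_iff₀ hd (by positivity)]
    nlinarith
  rw [tendsto_iff_norm_sub_tendsto_zero]
  exact squeeze_zero (fun n => norm_nonneg _) hdist tendsto_one_div_add_atTop_nhds_zero_nat

end TwoSidedIdeal

namespace LSCTraceOn

variable [CStarAlgebra A] [PartialOrder A] [StarOrderedRing A] {I : TwoSidedIdeal A}
  (τ : LSCTraceOn A I)

lemma toFun_mono {x y : A} (hx : x ∈ I) (hy : y ∈ I) (hx0 : 0 ≤ x) (hxy : x ≤ y) :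
    τ.toFun x ≤ τ.toFun y := by
  rw [← add_sub_cancel x y, τ.add' x (y - x) hx (I.sub_mem hy hx) hx0 (sub_nonneg.mpr hxy)]
  exact le_self_add

lemma toFun_le_of_tendsto {u : ℕ → A} {x : A} (hx : x ∈ I) (hu : ∀ n, u n ∈ I)
    (hlim : Tendsto u atTop (𝓝 x)) {C : ℝ≥0∞} (hC : ∀ n, τ.toFun (u n) ≤ C) :
    τ.toFun x ≤ C := by
  by_contra! hCx
  have hlim' : Tendsto u atTop (𝓝[(I : Set A)] x) :=
    tendsto_nhdsWithin_iff.mpr ⟨hlim, .of_forall hu⟩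
  obtain ⟨n, hn⟩ := (hlim'.eventually (τ.lsc x hx C hCx)).exists
  exact (hC n).not_gt hn

lemma toFun_conj_mono {c e f : A} (hc : 0 ≤ c) (he : e ∈ I.nonnegBall) (hf : f ∈ I.nonnegBall)
    (hef : e ≤ f) : τ.toFun (c * e * c) ≤ τ.toFun (c * f * c) :=
  τ.toFun_mono (I.mul_mul_mem c he.1 c) (I.mul_mul_mem c hf.1 c)
    (conjugate_nonneg_of_nonneg he.2.1 hc)
    (conjugate_le_conjugate_of_nonneg hef hc)

lemma toFun_sqrt_mul_mul_sqrt (hI : IsClosed (I : Set A)) {e : A} (he : e ∈ I.nonnegBall)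
    (c : A) : τ.toFun (sqrt e * (c * star c) * sqrt e) = τ.toFun (star c * e * c) := by
  have hstar : star (star c * sqrt e) = sqrt e * c := by
    rw [star_mul, star_star, (sqrt_nonneg e).isSelfAdjoint.star_eq]
  have h₁ : star (star c * sqrt e) * (star c * sqrt e) = sqrt e * (c * star c) * sqrt e := by
    rw [hstar]; noncomm_ring
  have h₂ : star c * sqrt e * star (star c * sqrt e) = star c * e * c := by
    rw [hstar, mul_assoc, ← mul_assoc (sqrt e), sqrt_mul_sqrt_self e he.2.1, mul_assoc]
  have h := τ.trace' (star c * sqrt e)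
    (h₁ ▸ I.sqrt_mul_mul_sqrt_mem hI he (c * star c))
    (h₂ ▸ I.mul_mul_mem (star c) he.1 c)
  rwa [h₁, h₂] at h

lemma toFun_sqrt_mul_mul_sqrt_comm (hI : IsClosed (I : Set A)) {e a : A}
    (he : e ∈ I.nonnegBall) (ha : 0 ≤ a) :
    τ.toFun (sqrt e * a * sqrt e) = τ.toFun (sqrt a * e * sqrt a) := by
  have h := τ.toFun_sqrt_mul_mul_sqrt hI he (sqrt a)
  rwa [(sqrt_nonneg a).isSelfAdjoint.star_eq, sqrt_mul_sqrt_self a ha] at h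

noncomputable def extend (a : A) : ℝ≥0∞ :=
  ⨆ e : I.nonnegBall, τ.toFun (sqrt (e : A) * a * sqrt (e : A))

lemma extend_mul_star (hI : IsClosed (I : Set A)) (c : A) :
    τ.extend (c * star c) = ⨆ e : I.nonnegBall, τ.toFun (star c * e * c) :=
  iSup_congr fun e => τ.toFun_sqrt_mul_mul_sqrt hI e.2 c

lemma extend_eq_iSup_sqrt (hI : IsClosed (I : Set A)) {a : A} (ha : 0 ≤ a) :
    τ.extend a = ⨆ e : I.nonnegBall, τ.toFun (sqrt a * e * sqrt a) :=
  iSup_congr fun e => τ.toFun_sqrt_mul_mul_sqrt_comm hI e.2 ha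

lemma extend_zero : τ.extend 0 = 0 := by
  simp [extend, τ.map_zero']

lemma extend_smul (hI : IsClosed (I : Set A)) (r : ℝ≥0) {a : A} (ha : 0 ≤ a) :
    τ.extend (r • a) = r * τ.extend a := by
  simp only [extend, ENNReal.mul_iSup, mul_smul_comm, smul_mul_assoc]
  exact iSup_congr fun e => τ.smul' r _ (I.sqrt_mul_mul_sqrt_mem hI e.2 a)
    (conjugate_nonneg_of_nonneg ha (sqrt_nonneg _))

lemma extend_add (hI : IsClosed (I : Set A)) {a b : A} (ha : 0 ≤ a) (hb : 0 ≤ b) :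
    τ.extend (a + b) = τ.extend a + τ.extend b := by
  have hsplit : τ.extend (a + b) = ⨆ e : I.nonnegBall,
      (τ.toFun (sqrt a * e * sqrt a) + τ.toFun (sqrt b * e * sqrt b)) := by
    refine iSup_congr fun e => ?_
    rw [mul_add, add_mul, τ.add' _ _ (I.sqrt_mul_mul_sqrt_mem hI e.2 a)
      (I.sqrt_mul_mul_sqrt_mem hI e.2 b) (conjugate_nonneg_of_nonneg ha (sqrt_nonneg _))
      (conjugate_nonneg_of_nonneg hb (sqrt_nonneg _)), τ.toFun_sqrt_mul_mul_sqrt_comm hI e.2 ha,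
      τ.toFun_sqrt_mul_mul_sqrt_comm hI e.2 hb]
  rw [hsplit, τ.extend_eq_iSup_sqrt hI ha, τ.extend_eq_iSup_sqrt hI hb, ENNReal.iSup_add_iSup]
  intro e f
  obtain ⟨g, hg, heg, hfg⟩ := I.directedOn_nonnegBall hI e.1 e.2 f.1 f.2
  exact ⟨⟨g, hg⟩, add_le_add (τ.toFun_conj_mono (sqrt_nonneg a) e.2 hg heg)
    (τ.toFun_conj_mono (sqrt_nonneg b) f.2 hg hfg)⟩

lemma extend_mono (hI : IsClosed (I : Set A)) {x y : A} (hx : 0 ≤ x) (hxy : x ≤ y) :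
    τ.extend x ≤ τ.extend y :=
  iSup_mono fun e => τ.toFun_mono (I.sqrt_mul_mul_sqrt_mem hI e.2 x)
    (I.sqrt_mul_mul_sqrt_mem hI e.2 y) (conjugate_nonneg_of_nonneg hx (sqrt_nonneg _))
    (conjugate_le_conjugate_of_nonneg hxy (sqrt_nonneg _))

lemma extend_of_mem (hI : IsClosed (I : Set A)) {x : A} (hx : x ∈ I) (hx0 : 0 ≤ x) :
    τ.extend x = τ.toFun x := by
  rw [τ.extend_eq_iSup_sqrt hI hx0]
  refine le_antisymm (iSup_le fun e => ?_) ?_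
  · have hle := conjugate_le_conjugate_of_nonneg (I.le_one_of_mem_nonnegBall e.2) (sqrt_nonneg x)
    rw [mul_one, sqrt_mul_sqrt_self x hx0] at hle
    exact τ.toFun_mono (I.mul_mul_mem _ e.2.1 _) hx
      (conjugate_nonneg_of_nonneg e.2.2.1 (sqrt_nonneg x)) hle
  · obtain ⟨e, he, hlim⟩ := I.exists_tendsto_sqrt_mul_mul_sqrt hI hx hx0
    exact τ.toFun_le_of_tendsto hx (fun n => I.mul_mul_mem _ (he n).1 _) hlim
      fun n => le_iSup_of_le ⟨e n, he n⟩ le_rfl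

lemma extend_mul_star_le (hI : IsClosed (I : Set A)) (a : A) :
    τ.extend (a * star a) ≤ τ.extend (star a * a) := by
  rw [τ.extend_mul_star hI]
  refine iSup_le fun e => ?_
  have hle := star_left_conjugate_le_conjugate (I.le_one_of_mem_nonnegBall e.2) a
  rw [mul_one] at hle
  have hnonneg := star_left_conjugate_nonneg e.2.2.1 a
  rw [← τ.extend_of_mem hI (I.mul_mul_mem _ e.2.1 _) hnonneg]
  exact τ.extend_mono hI hnonneg hle

lemma lowerSemicontinuous_extend (hI : IsClosed (I : Set A)) :
    LowerSemicontinuous τ.extend :=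
  lowerSemicontinuous_iSup fun e => lowerSemicontinuousOn_univ_iff.mp <|
    τ.lsc.comp (by fun_prop) fun a _ => I.sqrt_mul_mul_sqrt_mem hI e.2 a

noncomputable def toLSCTrace (hI : IsClosed (I : Set A)) : LSCTrace A where
  toFun := τ.extend
  map_zero' := τ.extend_zero
  add' _ _ := τ.extend_add hI
  smul' r _ := τ.extend_smul hI r
  trace' a := le_antisymm (by simpa using τ.extend_mul_star_le hI (star a))
    (τ.extend_mul_star_le hI a)
  lsc := τ.lowerSemicontinuous_extend hI

lemma dFunOn_eq_dFun_toLSCTrace (hI : IsClosed (I : Set A)) {a : A} (ha : a ∈ I)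
    (ha0 : 0 ≤ a) : dFunOn τ a = dFun (τ.toLSCTrace hI) a :=
  iSup_congr fun ε => (τ.extend_of_mem hI (I.cutoff_mem hI ε.2.le ha ha0.isSelfAdjoint)
    (cfc_nonneg fun _ _ => le_max_right _ _)).symm

end LSCTraceOn

theorem trace_extends_from_simple_ideal_general [CStarAlgebra A] [PartialOrder A] [StarOrderedRing A]
    (I : TwoSidedIdeal A) (hIc : IsClosed (I : Set A)) :
    (∀ τ : LSCTraceOn A I, ∃ τ' : LSCTrace A, ∀ x ∈ I, 0 ≤ x → τ'.toFun x = τ.toFun x) ∧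
    (∀ a b : A, a ∈ I → b ∈ I → 0 ≤ a → 0 ≤ b →
      (∀ σ : LSCTrace A, dFun σ a ≤ dFun σ b) →
      ∀ τ : LSCTraceOn A I, dFunOn τ a ≤ dFunOn τ b) := by
  refine ⟨fun τ => ⟨τ.toLSCTrace hIc, fun x hx hx0 => τ.extend_of_mem hIc hx hx0⟩, ?_⟩
  intro a b ha hb ha0 hb0 hcomp τ
  rw [τ.dFunOn_eq_dFun_toLSCTrace hIc ha ha0, τ.dFunOn_eq_dFun_toLSCTrace hIc hb hb0]
  exact hcomp _

/-- A lower semicontinuous densely defined trace on a simple closed two-sided ideal `I`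
extends to a lower semicontinuous trace on `A`; consequently comparison of dimension
functions over all traces of `A` implies comparison over all such traces of `I`. -/
theorem trace_extends_from_simple_ideal [CStarAlgebra A] [PartialOrder A] [StarOrderedRing A]
    (I : TwoSidedIdeal A) (hIc : IsClosed (I : Set A)) (hbot : I ≠ ⊥)
    (hsimple : ∀ J : TwoSidedIdeal A, IsClosed (J : Set A) → J ≤ I → J = ⊥ ∨ J = I) :
    (∀ τ : LSCTraceOn A I, ∃ τ' : LSCTrace A, ∀ x ∈ I, 0 ≤ x → τ'.toFun x = τ.toFun x) ∧
    (∀ a b : A, a ∈ I → b ∈ I → 0 ≤ a → 0 ≤ b →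
      (∀ σ : LSCTrace A, dFun σ a ≤ dFun σ b) →
      ∀ τ : LSCTraceOn A I, dFunOn τ a ≤ dFunOn τ b) :=
  trace_extends_from_simple_ideal_general I hIc
end
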